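/- Let X, Y, Ŷ be random vectors in ℝᵈ with E‖X - Y‖² ≤ σ² and E‖X - Ŷ‖² ≤ κσ². Let ξ be a Bernoulli random variable independent of (X, Y, Ŷ) with P(ξ = 1) = (K-1)/K, and let θ ∈ [0,1]. Define Z = (1-θ)Y + ξθY + (1-ξ)θŶ. Then E‖X - Z‖² ≤ (1 - θ/K + θκ/K)σ², provided κ ≥ 1 or more generally under the stated bounds. -/

import Mathlib

/-!
Write `t = (1 - ξ) θ ∈ [0, 1]`. Then `X - Z = (1 - t) (X - Y) + t (X - Ŷ)`, so convexity of `‖·‖²`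
gives `‖X - Z‖² ≤ ‖X - Y‖² + (1 - ξ) θ (‖X - Ŷ‖² - ‖X - Y‖²)` pointwise. Since `ξ` is independent
of `(X, Y, Ŷ)` and `E[1 - ξ] = 1 / K`, taking expectations yields
`E‖X - Z‖² ≤ (1 - θ / K) E‖X - Y‖² + (θ / K) E‖X - Ŷ‖²`.
-/

open MeasureTheory ProbabilityTheory

section Convexity

variable {E : Type*} [SeminormedAddCommGroup E] [NormedSpace ℝ E]

theorem sq_norm_smul_add_smul_le (a b : E) {t : ℝ} (ht0 : 0 ≤ t) (ht1 : t ≤ 1) :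
    ‖(1 - t) • a + t • b‖ ^ 2 ≤ (1 - t) * ‖a‖ ^ 2 + t * ‖b‖ ^ 2 := by
  have htriangle : ‖(1 - t) • a + t • b‖ ≤ (1 - t) * ‖a‖ + t * ‖b‖ := by
    calc ‖(1 - t) • a + t • b‖ ≤ ‖(1 - t) • a‖ + ‖t • b‖ := norm_add_le _ _
      _ = (1 - t) * ‖a‖ + t * ‖b‖ := by
        rw [norm_smul, norm_smul, Real.norm_of_nonneg (sub_nonneg.2 ht1), Real.norm_of_nonneg ht0]
  nlinarith [norm_nonneg ((1 - t) • a + t • b), mul_nonneg (mul_nonneg ht0 (sub_nonneg.2 ht1))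
    (sq_nonneg (‖a‖ - ‖b‖))]

theorem sq_norm_sub_smoothed_le (x y yhat : E) {s θ : ℝ} (hs0 : 0 ≤ s) (hs1 : s ≤ 1)
    (hθ0 : 0 ≤ θ) (hθ1 : θ ≤ 1) :
    ‖x - ((1 - θ) • y + (s * θ) • y + ((1 - s) * θ) • yhat)‖ ^ 2
      ≤ ‖x - y‖ ^ 2 + (1 - s) * (θ * (‖x - yhat‖ ^ 2 - ‖x - y‖ ^ 2)) := by
  have hsplit : x - ((1 - θ) • y + (s * θ) • y + ((1 - s) * θ) • yhat)
      = (1 - (1 - s) * θ) • (x - y) + ((1 - s) * θ) • (x - yhat) := by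
    module
  rw [hsplit]
  refine (sq_norm_smul_add_smul_le _ _ (by positivity) ?_).trans_eq (by ring)
  nlinarith

end Convexity

section Bernoulli

variable {Ω : Type*} {ξ : Ω → ℝ}

theorem eq_indicator_one_of_eq_zero_or_one (hξ01 : ∀ ω, ξ ω = 0 ∨ ξ ω = 1) :
    ξ = {ω | ξ ω = 1}.indicator 1 := by
  funext ω
  rcases hξ01 ω with h | h <;> simp [h]

variable [MeasurableSpace Ω] {μ : Measure Ω}

theorem integral_one_sub_mul_of_indepFun [IsProbabilityMeasure μ] {W : Ω → ℝ}
    (hξm : Measurable ξ) (hξ01 : ∀ ω, ξ ω = 0 ∨ ξ ω = 1) (hW : AEStronglyMeasurable W μ)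
    (hind : IndepFun (fun ω => 1 - ξ ω) W μ) :
    ∫ ω, (1 - ξ ω) * W ω ∂μ = (1 - μ.real {ω | ξ ω = 1}) * ∫ ω, W ω ∂μ := by
  have hset : MeasurableSet {ω | ξ ω = 1} := hξm (measurableSet_singleton 1)
  have hξint : Integrable ξ μ := by
    rw [eq_indicator_one_of_eq_zero_or_one hξ01]
    exact (integrable_const 1).indicator hset
  have hmean : ∫ ω, ξ ω ∂μ = μ.real {ω | ξ ω = 1} := by
    conv_lhs => rw [eq_indicator_one_of_eq_zero_or_one hξ01]
    exact integral_indicator_one hset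
  have hmean_one_sub : ∫ ω, (1 - ξ ω) ∂μ = 1 - μ.real {ω | ξ ω = 1} := by
    rw [integral_sub (integrable_const 1) hξint, hmean, integral_const, probReal_univ, one_smul]
  rw [← hmean_one_sub]
  exact hind.integral_mul_eq_mul_integral (measurable_const.sub hξm).aestronglyMeasurable hW

end Bernoulli

theorem atlas_variance_bound_general
    {Ω : Type*} [MeasurableSpace Ω] (μ : Measure Ω) [IsProbabilityMeasure μ]
    {d : ℕ} (X Y Yhat : Ω → EuclideanSpace ℝ (Fin d)) (ξ : Ω → ℝ)
    (σ κ θ K : ℝ) (hθ0 : 0 ≤ θ) (hθ1 : θ ≤ 1) (hK : 1 ≤ K)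
    (hξm : Measurable ξ)
    (hξ01 : ∀ ω, ξ ω = 0 ∨ ξ ω = 1)
    (hξp : μ {ω | ξ ω = 1} = ENNReal.ofReal ((K - 1) / K))
    (hindep : IndepFun ξ (fun ω => (X ω, Y ω, Yhat ω)) μ)
    (hXY : Integrable (fun ω => ‖X ω - Y ω‖ ^ 2) μ)
    (hXYh : Integrable (fun ω => ‖X ω - Yhat ω‖ ^ 2) μ)
    (hbY : ∫ ω, ‖X ω - Y ω‖ ^ 2 ∂μ ≤ σ ^ 2)
    (hbYh : ∫ ω, ‖X ω - Yhat ω‖ ^ 2 ∂μ ≤ κ * σ ^ 2) :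
    ∫ ω, ‖X ω - ((1 - θ) • Y ω + (ξ ω * θ) • Y ω + ((1 - ξ ω) * θ) • Yhat ω)‖ ^ 2 ∂μ
      ≤ (1 - θ / K + θ * κ / K) * σ ^ 2 := by
  set A := fun ω => ‖X ω - Y ω‖ ^ 2
  set B := fun ω => ‖X ω - Yhat ω‖ ^ 2
  set D := fun ω => θ * (B ω - A ω)
  have hK0 : 0 < K := by linarith
  have hξ_mem : ∀ ω, 0 ≤ ξ ω ∧ ξ ω ≤ 1 := fun ω => by rcases hξ01 ω with h | h <;> simp [h]
  have hD : Integrable D μ := (hXYh.sub hXY).const_mul θ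
  have hindD : IndepFun (fun ω => 1 - ξ ω) D μ :=
    hindep.comp (φ := fun x : ℝ => 1 - x)
      (ψ := fun p : _ × _ × _ => θ * (‖p.1 - p.2.2‖ ^ 2 - ‖p.1 - p.2.1‖ ^ 2))
      (by fun_prop) (by fun_prop)
  have hprob : μ.real {ω | ξ ω = 1} = (K - 1) / K := by
    rw [measureReal_def, hξp, ENNReal.toReal_ofReal (div_nonneg (by linarith) hK0.le)]
  have hmix : ∫ ω, (1 - ξ ω) * D ω ∂μ = θ / K * (∫ ω, B ω ∂μ - ∫ ω, A ω ∂μ) := by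
    rw [integral_one_sub_mul_of_indepFun hξm hξ01 hD.1 hindD, hprob, integral_const_mul,
      integral_sub hXYh hXY]
    field_simp
    ring
  have hmix_int : Integrable (fun ω => (1 - ξ ω) * D ω) μ :=
    hD.bdd_mul (c := 1) (measurable_const.sub hξm).aestronglyMeasurable
      (ae_of_all _ fun ω => by
        rw [Real.norm_eq_abs, abs_le]; constructor <;> linarith [hξ_mem ω])
  calc _ ≤ ∫ ω, (A ω + (1 - ξ ω) * D ω) ∂μ :=
        integral_mono_of_nonneg (ae_of_all _ fun _ => by positivity) (hXY.add hmix_int)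
          (ae_of_all _ fun ω => sq_norm_sub_smoothed_le _ _ _
            (hξ_mem ω).1 (hξ_mem ω).2 hθ0 hθ1)
    _ = (1 - θ / K) * ∫ ω, A ω ∂μ + θ / K * ∫ ω, B ω ∂μ := by
        rw [integral_add hXY hmix_int, hmix]
        ring
    _ ≤ (1 - θ / K) * σ ^ 2 + θ / K * (κ * σ ^ 2) := by
        gcongr
        exact sub_nonneg.2 ((div_le_one hK0).2 (by linarith))
    _ = (1 - θ / K + θ * κ / K) * σ ^ 2 := by ring

theorem atlas_variance_bound
    {Ω : Type*} [MeasurableSpace Ω] (μ : Measure Ω) [IsProbabilityMeasure μ]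
    {d : ℕ} (X Y Yhat : Ω → EuclideanSpace ℝ (Fin d)) (ξ : Ω → ℝ)
    (σ κ θ K : ℝ) (hσ : 0 ≤ σ) (hκ : 1 ≤ κ) (hθ0 : 0 ≤ θ) (hθ1 : θ ≤ 1) (hK : 1 ≤ K)
    (hXm : Measurable X) (hYm : Measurable Y) (hYhm : Measurable Yhat)
    (hξm : Measurable ξ)
    (hξ01 : ∀ ω, ξ ω = 0 ∨ ξ ω = 1)
    (hξp : μ {ω | ξ ω = 1} = ENNReal.ofReal ((K - 1) / K))
    (hindep : IndepFun ξ (fun ω => (X ω, Y ω, Yhat ω)) μ)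
    (hXY : Integrable (fun ω => ‖X ω - Y ω‖ ^ 2) μ)
    (hXYh : Integrable (fun ω => ‖X ω - Yhat ω‖ ^ 2) μ)
    (hZint : Integrable (fun ω =>
      ‖X ω - ((1 - θ) • Y ω + (ξ ω * θ) • Y ω + ((1 - ξ ω) * θ) • Yhat ω)‖ ^ 2) μ)
    (hbY : ∫ ω, ‖X ω - Y ω‖ ^ 2 ∂μ ≤ σ ^ 2)
    (hbYh : ∫ ω, ‖X ω - Yhat ω‖ ^ 2 ∂μ ≤ κ * σ ^ 2) :
    ∫ ω, ‖X ω - ((1 - θ) • Y ω + (ξ ω * θ) • Y ω + ((1 - ξ ω) * θ) • Yhat ω)‖ ^ 2 ∂μ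
      ≤ (1 - θ / K + θ * κ / K) * σ ^ 2 :=
  atlas_variance_bound_general μ X Y Yhat ξ σ κ θ K hθ0 hθ1 hK hξm hξ01 hξp hindep hXY hXYh hbY hbYh
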